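/- arXiv:2602.06858 — 2 statements merged into one kernel-verified Lean document; each statement's English description precedes it below -/
import Mathlib

section
/- The RoBoS-NN loss is redescending: its derivative L′(u) tends to 0 as u → +∞ and tends to 0 as u → −∞, so the influence of arbitrarily large residuals (outliers) on the gradient vanishes. -/
/-!
Writing `g u = a √(u² + ε) - a √ε` (`robos.arg`), the loss is `λ (1 - ρ (g u))` with
`ρ t = (t + 1) e^{-t}` and `ρ' t = -t e^{-t}`. Hence `L' u = λ a (u / √(u² + ε)) · g u e^{-g u}`:
the first factor is bounded by `|λ a|`, while `g u → ∞` as `|u| → ∞` and `t e^{-t} → 0` as `t → ∞`.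
-/

noncomputable def robos (a lam eps : ℝ) (u : ℝ) : ℝ :=
  lam * (1 - (a * Real.sqrt (u ^ 2 + eps) - a * Real.sqrt eps + 1) *
    Real.exp (-(a * Real.sqrt (u ^ 2 + eps) - a * Real.sqrt eps)))

open Real Filter Topology

lemma abs_le_sqrt_sq_add {c : ℝ} (hc : 0 ≤ c) (u : ℝ) : |u| ≤ √(u ^ 2 + c) := by
  rw [← sqrt_sq_eq_abs]
  exact sqrt_le_sqrt (by linarith)

lemma abs_div_sqrt_sq_add_le_one {c : ℝ} (hc : 0 ≤ c) (u : ℝ) : |u / √(u ^ 2 + c)| ≤ 1 := by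
  rw [abs_div, abs_of_nonneg (sqrt_nonneg _)]
  exact div_le_one_of_le₀ (abs_le_sqrt_sq_add hc u) (sqrt_nonneg _)

lemma tendsto_sqrt_sq_add_cocompact {c : ℝ} (hc : 0 ≤ c) :
    Tendsto (fun u : ℝ => √(u ^ 2 + c)) (cocompact ℝ) atTop :=
  tendsto_atTop_mono (abs_le_sqrt_sq_add hc) tendsto_norm_cocompact_atTop

lemma hasDerivAt_sqrt_sq_add {c : ℝ} (hc : 0 < c) (u : ℝ) :
    HasDerivAt (fun u : ℝ => √(u ^ 2 + c)) (u / √(u ^ 2 + c)) u := by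
  have hpos : 0 < u ^ 2 + c := by positivity
  refine (((hasDerivAt_pow 2 u).add_const c).sqrt hpos.ne').congr_deriv ?_
  field_simp
  norm_num

lemma hasDerivAt_add_one_mul_exp_neg (t : ℝ) :
    HasDerivAt (fun t => (t + 1) * exp (-t)) (-(t * exp (-t))) t :=
  (((hasDerivAt_id' t).add_const 1).mul (hasDerivAt_neg t).exp).congr_deriv (by ring)

namespace robos

variable {a lam eps : ℝ}

noncomputable def arg (a eps u : ℝ) : ℝ := a * √(u ^ 2 + eps) - a * √eps

lemma hasDerivAt_arg (heps : 0 < eps) (u : ℝ) :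
    HasDerivAt (arg a eps) (a * (u / √(u ^ 2 + eps))) u :=
  ((hasDerivAt_sqrt_sq_add heps u).const_mul a).sub_const _

lemma hasDerivAt (heps : 0 < eps) (u : ℝ) :
    HasDerivAt (robos a lam eps)
      (lam * a * (u / √(u ^ 2 + eps)) * (arg a eps u * exp (-arg a eps u))) u := by
  have h := (((hasDerivAt_add_one_mul_exp_neg (arg a eps u)).comp u
    (hasDerivAt_arg heps u)).const_sub 1).const_mul lam
  exact h.congr_deriv (by ring)

lemma tendsto_arg_cocompact (ha : 0 < a) (heps : 0 ≤ eps) :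
    Tendsto (arg a eps) (cocompact ℝ) atTop :=
  tendsto_atTop_add_const_right _ _
    ((tendsto_const_mul_atTop_of_pos ha).2 (tendsto_sqrt_sq_add_cocompact heps))

lemma norm_deriv_le (heps : 0 < eps) (u : ℝ) :
    ‖deriv (robos a lam eps) u‖ ≤ ‖lam * a‖ * ‖arg a eps u * exp (-arg a eps u)‖ := by
  rw [(hasDerivAt heps u).deriv, norm_mul, norm_mul (lam * a)]
  gcongr
  exact mul_le_of_le_one_right (norm_nonneg _) (abs_div_sqrt_sq_add_le_one heps.le u)

lemma tendsto_deriv_cocompact (ha : 0 < a) (heps : 0 < eps) :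
    Tendsto (deriv (robos a lam eps)) (cocompact ℝ) (𝓝 0) := by
  have hdecay : Tendsto (fun t : ℝ => t * exp (-t)) atTop (𝓝 0) := by
    simpa using tendsto_pow_mul_exp_neg_atTop_nhds_zero 1
  have hbound : Tendsto (fun u => ‖lam * a‖ * ‖arg a eps u * exp (-arg a eps u)‖)
      (cocompact ℝ) (𝓝 0) := by
    simpa using ((hdecay.comp (tendsto_arg_cocompact ha heps.le)).norm).const_mul ‖lam * a‖
  exact squeeze_zero_norm (norm_deriv_le heps) hbound

end robos

theorem robos_redescending_general (a lam eps : ℝ) (ha : 0 < a) (heps : 0 < eps) :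
    Filter.Tendsto (deriv (robos a lam eps)) Filter.atTop (nhds 0) ∧
    Filter.Tendsto (deriv (robos a lam eps)) Filter.atBot (nhds 0) := by
  have h := robos.tendsto_deriv_cocompact (lam := lam) ha heps
  exact ⟨h.mono_left atTop_le_cocompact, h.mono_left atBot_le_cocompact⟩

theorem robos_redescending (a lam eps : ℝ) (ha : 0 < a) (hlam : 0 < lam) (heps : 0 < eps) :
    Filter.Tendsto (deriv (robos a lam eps)) Filter.atTop (nhds 0) ∧
    Filter.Tendsto (deriv (robos a lam eps)) Filter.atBot (nhds 0) :=
  robos_redescending_general a lam eps ha heps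
end

section
/- The RoBoS-NN loss is strictly increasing on the nonnegative half-line: for all real numbers u, v with 0 ≤ u < v, one has L(u) < L(v). -/
/-! $L(u) = λ\,g(φ(u))$ with $g(t) = 1 - (t+1)e^{-t}$ and $φ(u) = a(\sqrt{u^2+ε} - \sqrt{ε})$.
Since $g'(t) = t e^{-t} > 0$ for $t > 0$, $g$ is strictly increasing on $[0, ∞)$, and $φ$ maps
$[0, ∞)$ strictly increasingly into $[0, ∞)$. -/

open Real Set

lemma hasDerivAt_one_sub_add_one_mul_exp_neg (t : ℝ) :
    HasDerivAt (fun t : ℝ => 1 - (t + 1) * exp (-t)) (t * exp (-t)) t := by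
  have h : HasDerivAt (fun t : ℝ => 1 - (t + 1) * exp (-t))
      (0 - (1 * exp (-t) + (t + 1) * (exp (-t) * -1))) t :=
    (hasDerivAt_const t 1).sub (((hasDerivAt_id' t).add_const 1).mul (hasDerivAt_neg t).exp)
  exact h.congr_deriv (by ring)

lemma strictMonoOn_one_sub_add_one_mul_exp_neg :
    StrictMonoOn (fun t : ℝ => 1 - (t + 1) * exp (-t)) (Ici 0) := by
  refine strictMonoOn_of_deriv_pos (convex_Ici 0) (by fun_prop) fun t ht => ?_
  rw [interior_Ici] at ht
  rw [(hasDerivAt_one_sub_add_one_mul_exp_neg t).deriv]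
  exact mul_pos ht (exp_pos _)

lemma sqrt_le_sqrt_sq_add (eps w : ℝ) : √eps ≤ √(w ^ 2 + eps) :=
  sqrt_le_sqrt (le_add_of_nonneg_left (sq_nonneg w))

lemma sqrt_sq_add_lt_sqrt_sq_add {eps u v : ℝ} (heps : 0 ≤ eps) (hu : 0 ≤ u) (huv : u < v) :
    √(u ^ 2 + eps) < √(v ^ 2 + eps) :=
  sqrt_lt_sqrt (by positivity) (by gcongr)

theorem robos_strictMono_nonneg (a lam eps : ℝ) (ha : 0 < a) (hlam : 0 < lam) (heps : 0 < eps) :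
    ∀ u v : ℝ, 0 ≤ u → u < v → robos a lam eps u < robos a lam eps v := by
  intro u v hu huv
  have hshift_nonneg (w : ℝ) : 0 ≤ a * √(w ^ 2 + eps) - a * √eps :=
    sub_nonneg.mpr (mul_le_mul_of_nonneg_left (sqrt_le_sqrt_sq_add eps w) ha.le)
  have hshift_lt : a * √(u ^ 2 + eps) - a * √eps < a * √(v ^ 2 + eps) - a * √eps :=
    sub_lt_sub_right (mul_lt_mul_of_pos_left (sqrt_sq_add_lt_sqrt_sq_add heps.le hu huv) ha) _
  exact mul_lt_mul_of_pos_left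
    (strictMonoOn_one_sub_add_one_mul_exp_neg (hshift_nonneg u) (hshift_nonneg v) hshift_lt) hlam
end
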